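/- arXiv:1801.07139 — 2 statements merged into one kernel-verified Lean document; each statement's English description precedes it below -/
import Mathlib

section
/- Fix real parameters α, β ≥ 0 and a. Let l, u, π : ℝ × ℝ → ℝ be smooth with l_x ≠ 0 everywhere and satisfying: (i) αu − β u_xx = −π l_x + (a/2) ∂_x(l_xx/l_x); (ii) l_t + u l_x = 0; (iii) π_t + ∂_x(π u − (a/2) u_xx/l_x) = 0. Let (V¹,V²,V³) and (W¹,W²,W³) be smooth triples solving the linearized equations along (l,u,π): (L1) αV² − β V²_xx = −V³ l_x − π V¹_x + (a/2) ∂_x( (l_x V¹_xx − l_xx V¹_x)/l_x² ); (L2) V¹_t + V² l_x + u V¹_x = 0; (L3) V³_t + ∂_x( V³ u + π V² − (a/2)(l_x V²_xx − u_xx V¹_x)/l_x² ) = 0, and the same equations for (W¹,W²,W³). Define F := −W¹V³ + W³V¹ and G := −π(W¹V² − W²V¹) − u(W¹V³ − W³V¹) − (a/2)(u_xx/l_x²)(W¹ V¹_x − W¹_x V¹) + (a/(2 l_x))(W¹ V²_xx − W²_xx V¹) − β(W² V²_x − W²_x V²) + (a/2)(l_xx/l_x²)(W² V¹_x − W¹_x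 V²) − (a/(2 l_x))(W² V¹_xx − W¹_xx V²) − (a/(2 l_x))(W¹_x V²_x − W²_x V¹_x). Then the conservation of symplecticity law ∂_t F + ∂_x G = 0 holds at every point. -/
set_option maxHeartbeats 4000000

/-- Partial derivative in the first (spatial) variable. -/
noncomputable def px (f : ℝ → ℝ → ℝ) : ℝ → ℝ → ℝ := fun x t => deriv (fun y => f y t) x

/-- Partial derivative in the second (time) variable. -/
noncomputable def pt (f : ℝ → ℝ → ℝ) : ℝ → ℝ → ℝ := fun x t => deriv (fun s => f x s) t

/-- The density `F` of the conservation-of-symplecticity law. -/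
noncomputable def Fdens (V1 V3 W1 W3 : ℝ → ℝ → ℝ) : ℝ → ℝ → ℝ :=
  fun x t => -(W1 x t) * V3 x t + W3 x t * V1 x t

/-- The flux `G` of the conservation-of-symplecticity law. -/
noncomputable def Gdens (a β : ℝ) (l u pr V1 V2 V3 W1 W2 W3 : ℝ → ℝ → ℝ) : ℝ → ℝ → ℝ :=
  fun x t =>
    -(pr x t) * (W1 x t * V2 x t - W2 x t * V1 x t)
      - u x t * (W1 x t * V3 x t - W3 x t * V1 x t)
      - (a / 2) * (px (px u) x t / (px l x t) ^ 2)
          * (W1 x t * px V1 x t - px W1 x t * V1 x t)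
      + (a / (2 * px l x t)) * (W1 x t * px (px V2) x t - px (px W2) x t * V1 x t)
      - β * (W2 x t * px V2 x t - px W2 x t * V2 x t)
      + (a / 2) * (px (px l) x t / (px l x t) ^ 2)
          * (W2 x t * px V1 x t - px W1 x t * V2 x t)
      - (a / (2 * px l x t)) * (W2 x t * px (px V1) x t - px (px W1) x t * V2 x t)
      - (a / (2 * px l x t)) * (px W1 x t * px V2 x t - px W2 x t * px V1 x t)

section Aux

private lemma diffX {f : ℝ → ℝ → ℝ} (hf : ContDiff ℝ (⊤ : ℕ∞) (fun p : ℝ × ℝ => f p.1 p.2)) (t : ℝ) :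
    Differentiable ℝ (fun y => f y t) :=
  (hf.differentiable (by simp)).comp (differentiable_id.prodMk (differentiable_const t))

private lemma diffT {f : ℝ → ℝ → ℝ} (hf : ContDiff ℝ (⊤ : ℕ∞) (fun p : ℝ × ℝ => f p.1 p.2)) (x : ℝ) :
    Differentiable ℝ (fun s => f x s) :=
  (hf.differentiable (by simp)).comp ((differentiable_const x).prodMk differentiable_id)

private lemma hasDX {f : ℝ → ℝ → ℝ} (hf : ContDiff ℝ (⊤ : ℕ∞) (fun p : ℝ × ℝ => f p.1 p.2)) (x t : ℝ) :
    HasDerivAt (fun y => f y t) (px f x t) x :=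
  ((diffX hf t) x).hasDerivAt

private lemma hasDT {f : ℝ → ℝ → ℝ} (hf : ContDiff ℝ (⊤ : ℕ∞) (fun p : ℝ × ℝ => f p.1 p.2)) (x t : ℝ) :
    HasDerivAt (fun s => f x s) (pt f x t) t :=
  ((diffT hf x) t).hasDerivAt

private lemma smooth_px {f : ℝ → ℝ → ℝ} (hf : ContDiff ℝ (⊤ : ℕ∞) (fun p : ℝ × ℝ => f p.1 p.2)) :
    ContDiff ℝ (⊤ : ℕ∞) (fun p : ℝ × ℝ => px f p.1 p.2) := by
  have key : (fun p : ℝ × ℝ => px f p.1 p.2)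
      = fun p : ℝ × ℝ => fderiv ℝ (fun q : ℝ × ℝ => f q.1 q.2) p ((1 : ℝ), (0 : ℝ)) := by
    funext p
    have h1 : HasFDerivAt (fun q : ℝ × ℝ => f q.1 q.2)
        (fderiv ℝ (fun q : ℝ × ℝ => f q.1 q.2) p) p :=
      (hf.differentiable (by simp) p).hasFDerivAt
    have h2 : HasDerivAt (fun y : ℝ => (y, p.2)) ((1 : ℝ), (0 : ℝ)) p.1 :=
      (hasDerivAt_id p.1).prodMk (hasDerivAt_const p.1 p.2)
    exact (h1.comp_hasDerivAt p.1 h2).deriv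
  rw [key]
  exact (hf.fderiv_right (by simp)).clm_apply contDiff_const

private lemma HasDerivAt.congr_d {f : ℝ → ℝ} {a b x : ℝ} (h : HasDerivAt f a x) (e : a = b) :
    HasDerivAt f b x := e ▸ h

private lemma clebsch_key {a α β l1 l2 l3 u0 u1 u2 u3 p0 p1
    v1 v1x v1xx v1xxx v2 v2x v2xx v2xxx v3 v3x v1t v3t
    w1 w1x w1xx w1xxx w2 w2x w2xx w2xxx w3 w3x w1t w3t : ℝ}
    (hl1 : l1 ≠ 0)
    (hA : α * v2 - β * v2xx = -v3 * l1 - p0 * v1x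
        + (a / 2) * ((l1 * (l1 * v1xxx - l3 * v1x) - 2 * l2 * (l1 * v1xx - l2 * v1x)) / l1 ^ 3))
    (hB : v1t + v2 * l1 + u0 * v1x = 0)
    (hC : v3t + (v3x * u0 + v3 * u1 + p1 * v2 + p0 * v2x
        - (a / 2) * ((l1 * (l2 * v2xx + l1 * v2xxx - u3 * v1x - u2 * v1xx)
            - 2 * l2 * (l1 * v2xx - u2 * v1x)) / l1 ^ 3)) = 0)
    (hA' : α * w2 - β * w2xx = -w3 * l1 - p0 * w1x
        + (a / 2) * ((l1 * (l1 * w1xxx - l3 * w1x) - 2 * l2 * (l1 * w1xx - l2 * w1x)) / l1 ^ 3))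
    (hB' : w1t + w2 * l1 + u0 * w1x = 0)
    (hC' : w3t + (w3x * u0 + w3 * u1 + p1 * w2 + p0 * w2x
        - (a / 2) * ((l1 * (l2 * w2xx + l1 * w2xxx - u3 * w1x - u2 * w1xx)
            - 2 * l2 * (l1 * w2xx - u2 * w1x)) / l1 ^ 3)) = 0) :
    (-(w1t * v3 + w1 * v3t) + (w3t * v1 + w3 * v1t))
    + (-(p1 * (w1 * v2 - w2 * v1) + p0 * (w1x * v2 + w1 * v2x - w2x * v1 - w2 * v1x))
      - (u1 * (w1 * v3 - w3 * v1) + u0 * (w1x * v3 + w1 * v3x - w3x * v1 - w3 * v1x))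
      - ((a / 2) * ((u3 * l1 - 2 * u2 * l2) / l1 ^ 3) * (w1 * v1x - w1x * v1)
        + (a / 2) * (u2 / l1 ^ 2) * (w1 * v1xx - w1xx * v1))
      + (-(a * l2 / (2 * l1 ^ 2)) * (w1 * v2xx - w2xx * v1)
        + (a / (2 * l1)) * (w1x * v2xx + w1 * v2xxx - w2xxx * v1 - w2xx * v1x))
      - β * (w2 * v2xx - w2xx * v2)
      + ((a / 2) * ((l3 * l1 - 2 * l2 ^ 2) / l1 ^ 3) * (w2 * v1x - w1x * v2)
        + (a / 2) * (l2 / l1 ^ 2) * (w2x * v1x + w2 * v1xx - w1xx * v2 - w1x * v2x))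
      - (-(a * l2 / (2 * l1 ^ 2)) * (w2 * v1xx - w1xx * v2)
        + (a / (2 * l1)) * (w2x * v1xx + w2 * v1xxx - w1xxx * v2 - w1xx * v2x))
      - (-(a * l2 / (2 * l1 ^ 2)) * (w1x * v2x - w2x * v1x)
        + (a / (2 * l1)) * (w1xx * v2x + w1x * v2xx - w2xx * v1x - w2x * v1xx))) = 0 := by
  have hv1t : v1t = -(v2 * l1 + u0 * v1x) := by linarith
  have hw1t : w1t = -(w2 * l1 + u0 * w1x) := by linarith
  have hv3t : v3t = -(v3x * u0 + v3 * u1 + p1 * v2 + p0 * v2x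
      - (a / 2) * ((l1 * (l2 * v2xx + l1 * v2xxx - u3 * v1x - u2 * v1xx)
          - 2 * l2 * (l1 * v2xx - u2 * v1x)) / l1 ^ 3)) := by linarith
  have hw3t : w3t = -(w3x * u0 + w3 * u1 + p1 * w2 + p0 * w2x
      - (a / 2) * ((l1 * (l2 * w2xx + l1 * w2xxx - u3 * w1x - u2 * w1xx)
          - 2 * l2 * (l1 * w2xx - u2 * w1x)) / l1 ^ 3)) := by linarith
  have hv3 : v3 = (-(α * v2 - β * v2xx) - p0 * v1x
      + (a / 2) * ((l1 * (l1 * v1xxx - l3 * v1x) - 2 * l2 * (l1 * v1xx - l2 * v1x)) / l1 ^ 3))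
      / l1 := by
    rw [eq_div_iff hl1]; linarith
  have hw3 : w3 = (-(α * w2 - β * w2xx) - p0 * w1x
      + (a / 2) * ((l1 * (l1 * w1xxx - l3 * w1x) - 2 * l2 * (l1 * w1xx - l2 * w1x)) / l1 ^ 3))
      / l1 := by
    rw [eq_div_iff hl1]; linarith
  rw [hv1t, hw1t, hv3t, hw3t, hv3, hw3]
  field_simp
  ring

end Aux

/-- Conservation of symplecticity: along a solution `(l,u,π)` of the Clebsch system, for any
two first variations `(V¹,V²,V³)` and `(W¹,W²,W³)` solving the linearized equations,
`∂_t F + ∂_x G = 0`. -/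
theorem stmt14 (α β a : ℝ) (hα : 0 ≤ α) (hβ : 0 ≤ β)
    (l u pr : ℝ → ℝ → ℝ)
    (hl : ContDiff ℝ (⊤ : ℕ∞) (fun p : ℝ × ℝ => l p.1 p.2))
    (hu : ContDiff ℝ (⊤ : ℕ∞) (fun p : ℝ × ℝ => u p.1 p.2))
    (hpr : ContDiff ℝ (⊤ : ℕ∞) (fun p : ℝ × ℝ => pr p.1 p.2))
    (hlx : ∀ x t : ℝ, px l x t ≠ 0)
    (h1 : ∀ x t : ℝ, α * u x t - β * px (px u) x t
        = -(pr x t) * px l x t + (a / 2) * px (fun x t => px (px l) x t / px l x t) x t)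
    (h2 : ∀ x t : ℝ, pt l x t + u x t * px l x t = 0)
    (h3 : ∀ x t : ℝ, pt pr x t
        + px (fun x t => pr x t * u x t - (a / 2) * px (px u) x t / px l x t) x t = 0)
    (V1 V2 V3 W1 W2 W3 : ℝ → ℝ → ℝ)
    (hV1 : ContDiff ℝ (⊤ : ℕ∞) (fun p : ℝ × ℝ => V1 p.1 p.2))
    (hV2 : ContDiff ℝ (⊤ : ℕ∞) (fun p : ℝ × ℝ => V2 p.1 p.2))
    (hV3 : ContDiff ℝ (⊤ : ℕ∞) (fun p : ℝ × ℝ => V3 p.1 p.2))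
    (hW1 : ContDiff ℝ (⊤ : ℕ∞) (fun p : ℝ × ℝ => W1 p.1 p.2))
    (hW2 : ContDiff ℝ (⊤ : ℕ∞) (fun p : ℝ × ℝ => W2 p.1 p.2))
    (hW3 : ContDiff ℝ (⊤ : ℕ∞) (fun p : ℝ × ℝ => W3 p.1 p.2))
    (hVL1 : ∀ x t : ℝ, α * V2 x t - β * px (px V2) x t
        = -(V3 x t) * px l x t - pr x t * px V1 x t
          + (a / 2) * px (fun x t =>
              (px l x t * px (px V1) x t - px (px l) x t * px V1 x t) / (px l x t) ^ 2) x t)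
    (hVL2 : ∀ x t : ℝ, pt V1 x t + V2 x t * px l x t + u x t * px V1 x t = 0)
    (hVL3 : ∀ x t : ℝ, pt V3 x t
        + px (fun x t => V3 x t * u x t + pr x t * V2 x t
            - (a / 2) * (px l x t * px (px V2) x t - px (px u) x t * px V1 x t)
                / (px l x t) ^ 2) x t = 0)
    (hWL1 : ∀ x t : ℝ, α * W2 x t - β * px (px W2) x t
        = -(W3 x t) * px l x t - pr x t * px W1 x t
          + (a / 2) * px (fun x t =>
              (px l x t * px (px W1) x t - px (px l) x t * px W1 x t) / (px l x t) ^ 2) x t)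
    (hWL2 : ∀ x t : ℝ, pt W1 x t + W2 x t * px l x t + u x t * px W1 x t = 0)
    (hWL3 : ∀ x t : ℝ, pt W3 x t
        + px (fun x t => W3 x t * u x t + pr x t * W2 x t
            - (a / 2) * (px l x t * px (px W2) x t - px (px u) x t * px W1 x t)
                / (px l x t) ^ 2) x t = 0) :
    ∀ x t : ℝ,
      pt (Fdens V1 V3 W1 W3) x t + px (Gdens a β l u pr V1 V2 V3 W1 W2 W3) x t = 0 := by
  intro x t
  -- smoothness of partial derivatives
  have hlx1 := smooth_px hl
  have hlx2 := smooth_px hlx1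
  have hux1 := smooth_px hu
  have hux2 := smooth_px hux1
  have hV1a := smooth_px hV1
  have hV1b := smooth_px hV1a
  have hV2a := smooth_px hV2
  have hV2b := smooth_px hV2a
  have hW1a := smooth_px hW1
  have hW1b := smooth_px hW1a
  have hW2a := smooth_px hW2
  have hW2b := smooth_px hW2a
  -- nonvanishing denominators
  have hl1 : px l x t ≠ 0 := hlx x t
  have hpow : (px l x t) ^ 2 ≠ 0 := pow_ne_zero 2 hl1
  have h2l1 : (2 : ℝ) * px l x t ≠ 0 := mul_ne_zero two_ne_zero hl1
  -- spatial derivatives at (x, t)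
  have Dl1 := hasDX hlx1 x t
  have Dl2 := hasDX hlx2 x t
  have Du := hasDX hu x t
  have Du2 := hasDX hux2 x t
  have Dpr := hasDX hpr x t
  have DV1 := hasDX hV1 x t
  have DV1x := hasDX hV1a x t
  have DV1xx := hasDX hV1b x t
  have DV2 := hasDX hV2 x t
  have DV2x := hasDX hV2a x t
  have DV2xx := hasDX hV2b x t
  have DV3 := hasDX hV3 x t
  have DW1 := hasDX hW1 x t
  have DW1x := hasDX hW1a x t
  have DW1xx := hasDX hW1b x t
  have DW2 := hasDX hW2 x t
  have DW2x := hasDX hW2a x t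
  have DW2xx := hasDX hW2b x t
  have DW3 := hasDX hW3 x t
  -- expansion of the Q-terms (in L1)
  have eQV : px (fun x t =>
      (px l x t * px (px V1) x t - px (px l) x t * px V1 x t) / (px l x t) ^ 2) x t
      = (px l x t * (px l x t * px (px (px V1)) x t - px (px (px l)) x t * px V1 x t)
          - 2 * px (px l) x t * (px l x t * px (px V1) x t - px (px l) x t * px V1 x t))
        / (px l x t) ^ 3 := by
    exact ((((Dl1.mul DV1xx).sub (Dl2.mul DV1x)).div (Dl1.fun_pow 2) hpow).congr_d
      (by simp only [Pi.mul_apply, Pi.sub_apply, Pi.add_apply, Pi.div_apply, Pi.neg_apply, Pi.pow_apply]; field_simp; ring)).deriv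
  have eQW : px (fun x t =>
      (px l x t * px (px W1) x t - px (px l) x t * px W1 x t) / (px l x t) ^ 2) x t
      = (px l x t * (px l x t * px (px (px W1)) x t - px (px (px l)) x t * px W1 x t)
          - 2 * px (px l) x t * (px l x t * px (px W1) x t - px (px l) x t * px W1 x t))
        / (px l x t) ^ 3 := by
    exact ((((Dl1.mul DW1xx).sub (Dl2.mul DW1x)).div (Dl1.fun_pow 2) hpow).congr_d
      (by simp only [Pi.mul_apply, Pi.sub_apply, Pi.add_apply, Pi.div_apply, Pi.neg_apply, Pi.pow_apply]; field_simp; ring)).deriv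
  -- expansion of the flux terms in L3
  have eRV : px (fun x t => V3 x t * u x t + pr x t * V2 x t
      - (a / 2) * (px l x t * px (px V2) x t - px (px u) x t * px V1 x t)
          / (px l x t) ^ 2) x t
      = px V3 x t * u x t + V3 x t * px u x t + px pr x t * V2 x t + pr x t * px V2 x t
        - (a / 2) * ((px l x t * (px (px l) x t * px (px V2) x t
              + px l x t * px (px (px V2)) x t - px (px (px u)) x t * px V1 x t
              - px (px u) x t * px (px V1) x t)
            - 2 * px (px l) x t * (px l x t * px (px V2) x t - px (px u) x t * px V1 x t))
          / (px l x t) ^ 3) := by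
    exact ((((DV3.mul Du).add (Dpr.mul DV2)).sub
      ((HasDerivAt.const_mul (a / 2) ((Dl1.mul DV2xx).sub (Du2.mul DV1x))).div
        (Dl1.fun_pow 2) hpow)).congr_d (by simp only [Pi.mul_apply, Pi.sub_apply, Pi.add_apply, Pi.div_apply, Pi.neg_apply, Pi.pow_apply]; field_simp; ring)).deriv
  have eRW : px (fun x t => W3 x t * u x t + pr x t * W2 x t
      - (a / 2) * (px l x t * px (px W2) x t - px (px u) x t * px W1 x t)
          / (px l x t) ^ 2) x t
      = px W3 x t * u x t + W3 x t * px u x t + px pr x t * W2 x t + pr x t * px W2 x t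
        - (a / 2) * ((px l x t * (px (px l) x t * px (px W2) x t
              + px l x t * px (px (px W2)) x t - px (px (px u)) x t * px W1 x t
              - px (px u) x t * px (px W1) x t)
            - 2 * px (px l) x t * (px l x t * px (px W2) x t - px (px u) x t * px W1 x t))
          / (px l x t) ^ 3) := by
    exact ((((DW3.mul Du).add (Dpr.mul DW2)).sub
      ((HasDerivAt.const_mul (a / 2) ((Dl1.mul DW2xx).sub (Du2.mul DW1x))).div
        (Dl1.fun_pow 2) hpow)).congr_d (by simp only [Pi.mul_apply, Pi.sub_apply, Pi.add_apply, Pi.div_apply, Pi.neg_apply, Pi.pow_apply]; field_simp; ring)).deriv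
  -- time derivative of F
  have eF : pt (Fdens V1 V3 W1 W3) x t
      = -(pt W1 x t * V3 x t + W1 x t * pt V3 x t)
        + (pt W3 x t * V1 x t + W3 x t * pt V1 x t) := by
    exact ((((hasDT hW1 x t).neg.mul (hasDT hV3 x t)).add
      ((hasDT hW3 x t).mul (hasDT hV1 x t))).congr_d (by simp only [Pi.neg_apply]; ring)).deriv
  -- spatial derivative of G
  have eG : px (Gdens a β l u pr V1 V2 V3 W1 W2 W3) x t
      = -(px pr x t * (W1 x t * V2 x t - W2 x t * V1 x t)
          + pr x t * (px W1 x t * V2 x t + W1 x t * px V2 x t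
            - px W2 x t * V1 x t - W2 x t * px V1 x t))
      - (px u x t * (W1 x t * V3 x t - W3 x t * V1 x t)
          + u x t * (px W1 x t * V3 x t + W1 x t * px V3 x t
            - px W3 x t * V1 x t - W3 x t * px V1 x t))
      - ((a / 2) * ((px (px (px u)) x t * px l x t - 2 * px (px u) x t * px (px l) x t)
            / (px l x t) ^ 3) * (W1 x t * px V1 x t - px W1 x t * V1 x t)
        + (a / 2) * (px (px u) x t / (px l x t) ^ 2)
            * (W1 x t * px (px V1) x t - px (px W1) x t * V1 x t))
      + (-(a * px (px l) x t / (2 * (px l x t) ^ 2))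
            * (W1 x t * px (px V2) x t - px (px W2) x t * V1 x t)
        + (a / (2 * px l x t)) * (px W1 x t * px (px V2) x t + W1 x t * px (px (px V2)) x t
            - px (px (px W2)) x t * V1 x t - px (px W2) x t * px V1 x t))
      - β * (W2 x t * px (px V2) x t - px (px W2) x t * V2 x t)
      + ((a / 2) * ((px (px (px l)) x t * px l x t - 2 * (px (px l) x t) ^ 2)
            / (px l x t) ^ 3) * (W2 x t * px V1 x t - px W1 x t * V2 x t)
        + (a / 2) * (px (px l) x t / (px l x t) ^ 2)
            * (px W2 x t * px V1 x t + W2 x t * px (px V1) x t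
              - px (px W1) x t * V2 x t - px W1 x t * px V2 x t))
      - (-(a * px (px l) x t / (2 * (px l x t) ^ 2))
            * (W2 x t * px (px V1) x t - px (px W1) x t * V2 x t)
        + (a / (2 * px l x t)) * (px W2 x t * px (px V1) x t + W2 x t * px (px (px V1)) x t
            - px (px (px W1)) x t * V2 x t - px (px W1) x t * px V2 x t))
      - (-(a * px (px l) x t / (2 * (px l x t) ^ 2))
            * (px W1 x t * px V2 x t - px W2 x t * px V1 x t)
        + (a / (2 * px l x t)) * (px (px W1) x t * px V2 x t + px W1 x t * px (px V2) x t
            - px (px W2) x t * px V1 x t - px W2 x t * px (px V1) x t)) := by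
    have HG := (((((((Dpr.neg.mul ((DW1.mul DV2).sub (DW2.mul DV1))).sub
      (Du.mul ((DW1.mul DV3).sub (DW3.mul DV1)))).sub
      ((HasDerivAt.const_mul (a / 2) (Du2.div (Dl1.fun_pow 2) hpow)).mul
        ((DW1.mul DV1x).sub (DW1x.mul DV1)))).add
      (((hasDerivAt_const x a).div (HasDerivAt.const_mul 2 Dl1) h2l1).mul
        ((DW1.mul DV2xx).sub (DW2xx.mul DV1)))).sub
      (HasDerivAt.const_mul β ((DW2.mul DV2x).sub (DW2x.mul DV2)))).add
      ((HasDerivAt.const_mul (a / 2) (Dl2.div (Dl1.fun_pow 2) hpow)).mul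
        ((DW2.mul DV1x).sub (DW1x.mul DV2)))).sub
      (((hasDerivAt_const x a).div (HasDerivAt.const_mul 2 Dl1) h2l1).mul
        ((DW2.mul DV1xx).sub (DW1xx.mul DV2)))).sub
      (((hasDerivAt_const x a).div (HasDerivAt.const_mul 2 Dl1) h2l1).mul
        ((DW1x.mul DV2x).sub (DW2x.mul DV1x)))
    exact (HG.congr_d (by simp only [Pi.mul_apply, Pi.sub_apply, Pi.add_apply, Pi.div_apply, Pi.neg_apply, Pi.pow_apply]; field_simp; ring)).deriv
  have hA := hVL1 x t; rw [eQV] at hA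
  have hC := hVL3 x t; rw [eRV] at hC
  have hA' := hWL1 x t; rw [eQW] at hA'
  have hC' := hWL3 x t; rw [eRW] at hC'
  rw [eF, eG]
  exact clebsch_key hl1 hA (hVL2 x t) hC hA' (hWL2 x t) hC'
end

section
/- Fix a real parameter a. Let l, u, π : ℝ × ℝ → ℝ be smooth with l_x ≠ 0 everywhere. Then the formal Euler–Lagrange expression in the l-variable of the Lagrangian density L = (α/2)u² + (β/2)u_x² + (a/2) u_x l_xx/l_x + π(l_t + u l_x), namely −∂_t π − ∂_x( π u − (a/2) u_x l_xx / l_x² ) + ∂_x²( (a/2) u_x / l_x ), is identically equal to −( π_t + ∂_x( π u − (a/2) u_xx / l_x ) ). In particular, the second-order Euler–Lagrange equation for l holds if and only if π_t + ∂_x(π u − (a/2) u_xx/l_x) = 0. -/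
/-- A function of two real variables is smooth (as a function on `ℝ × ℝ`). -/
def Smooth2 (f : ℝ → ℝ → ℝ) : Prop := ContDiff ℝ (⊤ : ℕ∞) (fun p : ℝ × ℝ => f p.1 p.2)

lemma smooth2_diffAt {f : ℝ → ℝ → ℝ} (hf : Smooth2 f) (x t : ℝ) :
    DifferentiableAt ℝ (fun y => f y t) x := by
  have h := (hf.differentiable (by simp)).differentiableAt (x := ((x, t) : ℝ × ℝ))
  exact h.comp x ((differentiableAt_fun_id (𝕜 := ℝ) (x := x)).prodMk (differentiableAt_const t))

lemma px_eq_fderiv {f : ℝ → ℝ → ℝ} (hf : Smooth2 f) (x t : ℝ) :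
    px f x t = fderiv ℝ (fun p : ℝ × ℝ => f p.1 p.2) (x, t) (1, 0) := by
  have h1 : HasDerivAt (fun y : ℝ => ((y, t) : ℝ × ℝ)) ((1 : ℝ), (0 : ℝ)) x :=
    (hasDerivAt_id x).prodMk (hasDerivAt_const x t)
  have h2 := ((hf.differentiable (by simp) (x, t)).hasFDerivAt).comp_hasDerivAt x h1
  exact h2.deriv

lemma smooth2_px {f : ℝ → ℝ → ℝ} (hf : Smooth2 f) : Smooth2 (px f) := by
  have h2 : ContDiff ℝ (⊤ : ℕ∞) (fun p : ℝ × ℝ =>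
      fderiv ℝ (fun q : ℝ × ℝ => f q.1 q.2) p ((1 : ℝ), (0 : ℝ))) :=
    (hf.fderiv_right (by simp)).clm_apply contDiff_const
  have he : (fun p : ℝ × ℝ => px f p.1 p.2) =
      fun p : ℝ × ℝ => fderiv ℝ (fun q : ℝ × ℝ => f q.1 q.2) p ((1 : ℝ), (0 : ℝ)) :=
    funext fun p => px_eq_fderiv hf p.1 p.2
  unfold Smooth2
  rw [he]; exact h2

/-- The formal second-order Euler–Lagrange expression in the `l`-variable of the Clebsch
Lagrangian density, `−∂_tπ − ∂_x(πu − (a/2)u_x l_xx/l_x²) + ∂_x²((a/2)u_x/l_x)`, equals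
`−(π_t + ∂_x(πu − (a/2)u_xx/l_x))`; in particular the Euler–Lagrange equation for `l` holds
iff `π_t + ∂_x(πu − (a/2)u_xx/l_x) = 0`. -/
theorem stmt17 (a : ℝ) (l u pr : ℝ → ℝ → ℝ)
    (hl : ContDiff ℝ (⊤ : ℕ∞) (fun p : ℝ × ℝ => l p.1 p.2))
    (hu : ContDiff ℝ (⊤ : ℕ∞) (fun p : ℝ × ℝ => u p.1 p.2))
    (hpr : ContDiff ℝ (⊤ : ℕ∞) (fun p : ℝ × ℝ => pr p.1 p.2))
    (hlx : ∀ x t : ℝ, px l x t ≠ 0) :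
    (∀ x t : ℝ,
      -(pt pr x t)
        - px (fun x t => pr x t * u x t
            - (a / 2) * px u x t * px (px l) x t / (px l x t) ^ 2) x t
        + px (px (fun x t => (a / 2) * px u x t / px l x t)) x t
      = -(pt pr x t
          + px (fun x t => pr x t * u x t - (a / 2) * px (px u) x t / px l x t) x t))
    ∧ ((∀ x t : ℝ,
        -(pt pr x t)
          - px (fun x t => pr x t * u x t
              - (a / 2) * px u x t * px (px l) x t / (px l x t) ^ 2) x t
          + px (px (fun x t => (a / 2) * px u x t / px l x t)) x t = 0)
      ↔ (∀ x t : ℝ,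
        pt pr x t
          + px (fun x t => pr x t * u x t - (a / 2) * px (px u) x t / px l x t) x t = 0)) := by
  have spxu : Smooth2 (px u) := smooth2_px hu
  have spxl : Smooth2 (px l) := smooth2_px hl
  have spxxu : Smooth2 (px (px u)) := smooth2_px spxu
  have spxxl : Smooth2 (px (px l)) := smooth2_px spxl
  have sA : Smooth2 (fun x t => pr x t * u x t) := hpr.mul hu
  have sH1 : Smooth2 (fun x t => (a / 2) * px (px u) x t / px l x t) :=
    (contDiff_const.mul spxxu).div spxl (fun p => hlx p.1 p.2)
  have sH2 : Smooth2 (fun x t => (a / 2) * px u x t * px (px l) x t / (px l x t) ^ 2) :=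
    ((contDiff_const.mul spxu).mul spxxl).div (spxl.pow 2)
      (fun p => pow_ne_zero 2 (hlx p.1 p.2))
  have keyg : px (fun x t => (a / 2) * px u x t / px l x t) =
      fun x t => (a / 2) * px (px u) x t / px l x t
        - (a / 2) * px u x t * px (px l) x t / (px l x t) ^ 2 := by
    funext x t
    have hnum : DifferentiableAt ℝ (fun y => (a / 2) * px u y t) x :=
      (smooth2_diffAt spxu x t).const_mul _
    have hden := smooth2_diffAt spxl x t
    show deriv (fun y => (a / 2) * px u y t / px l y t) x = _
    rw [deriv_fun_div hnum hden (hlx x t), deriv_const_mul _ (smooth2_diffAt spxu x t)]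
    have r1 : deriv (fun y => px u y t) x = px (px u) x t := rfl
    have r2 : deriv (fun y => px l y t) x = px (px l) x t := rfl
    rw [r1, r2]
    have h := hlx x t
    field_simp
  have main : ∀ x t : ℝ,
      -(pt pr x t)
        - px (fun x t => pr x t * u x t
            - (a / 2) * px u x t * px (px l) x t / (px l x t) ^ 2) x t
        + px (px (fun x t => (a / 2) * px u x t / px l x t)) x t
      = -(pt pr x t
          + px (fun x t => pr x t * u x t - (a / 2) * px (px u) x t / px l x t) x t) := by
    intro x t
    have e1 : px (fun x t => pr x t * u x t
          - (a / 2) * px u x t * px (px l) x t / (px l x t) ^ 2) x t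
        = px (fun x t => pr x t * u x t) x t
          - px (fun x t => (a / 2) * px u x t * px (px l) x t / (px l x t) ^ 2) x t :=
      deriv_sub (smooth2_diffAt sA x t) (smooth2_diffAt sH2 x t)
    have e2 : px (fun x t => pr x t * u x t - (a / 2) * px (px u) x t / px l x t) x t
        = px (fun x t => pr x t * u x t) x t
          - px (fun x t => (a / 2) * px (px u) x t / px l x t) x t :=
      deriv_sub (smooth2_diffAt sA x t) (smooth2_diffAt sH1 x t)
    have e3 : px (fun x t => (a / 2) * px (px u) x t / px l x t
          - (a / 2) * px u x t * px (px l) x t / (px l x t) ^ 2) x t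
        = px (fun x t => (a / 2) * px (px u) x t / px l x t) x t
          - px (fun x t => (a / 2) * px u x t * px (px l) x t / (px l x t) ^ 2) x t :=
      deriv_sub (smooth2_diffAt sH1 x t) (smooth2_diffAt sH2 x t)
    rw [keyg, e1, e2, e3]
    ring
  refine ⟨main, ?_⟩
  constructor
  · intro h x t
    have h1 := main x t
    have h2 := h x t
    linarith
  · intro h x t
    rw [main x t, h x t, neg_zero]
end
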